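/- In the sorted target calculus (sorts T, Q, W, K), every β-normal term is generated by the grammar: T_NF ::= λk.Q_NF | x W_NF; Q_NF ::= x W_NF K_NF | k W_NF; W_NF ::= x | λx.T_NF; K_NF ::= k | λx.Q_NF. That is, a term of sort T (resp. Q, W, K) is β-normal if and only if it belongs to T_NF (resp. Q_NF, W_NF, K_NF). -/

import Mathlib

/-! ## The sorted target calculus: T ::= λk.Q | WW; Q ::= KW | TK;
    W ::= x | λx.T; K ::= k | λx.Q -/

mutual
inductive TT : Type
  | lamK : ℕ → QT → TT
  | app : WT → WT → TT
  deriving DecidableEq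
inductive QT : Type
  | kw : KT → WT → QT
  | tk : TT → KT → QT
  deriving DecidableEq
inductive WT : Type
  | var : ℕ → WT
  | lam : ℕ → TT → WT
  deriving DecidableEq
inductive KT : Type
  | kvar : ℕ → KT
  | lamQ : ℕ → QT → KT
  deriving DecidableEq
end

mutual
/-- Free ordinary variables. -/
def fvT : TT → Finset ℕ
  | .lamK _ q => fvQ q
  | .app w1 w2 => fvW w1 ∪ fvW w2
def fvQ : QT → Finset ℕ
  | .kw K w => fvK K ∪ fvW w
  | .tk t K => fvT t ∪ fvK K
def fvW : WT → Finset ℕ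
  | .var x => {x}
  | .lam x t => fvT t \ {x}
def fvK : KT → Finset ℕ
  | .kvar _ => ∅
  | .lamQ x q => fvQ q \ {x}
end

mutual
/-- Free continuation variables. -/
def fkT : TT → Finset ℕ
  | .lamK k q => fkQ q \ {k}
  | .app w1 w2 => fkW w1 ∪ fkW w2
def fkQ : QT → Finset ℕ
  | .kw K w => fkK K ∪ fkW w
  | .tk t K => fkT t ∪ fkK K
def fkW : WT → Finset ℕ
  | .var _ => ∅
  | .lam _ t => fkT t
def fkK : KT → Finset ℕ
  | .kvar k => {k}
  | .lamQ _ q => fkQ q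
end

mutual
/-- Substitution of a sort-W term for an ordinary variable. -/
def wsubT (x : ℕ) (w : WT) : TT → TT
  | .lamK k q => .lamK k (wsubQ x w q)
  | .app w1 w2 => .app (wsubW x w w1) (wsubW x w w2)
def wsubQ (x : ℕ) (w : WT) : QT → QT
  | .kw K w' => .kw (wsubK x w K) (wsubW x w w')
  | .tk t K => .tk (wsubT x w t) (wsubK x w K)
def wsubW (x : ℕ) (w : WT) : WT → WT
  | .var y => if y = x then w else .var y
  | .lam y t => if y = x then .lam y t else .lam y (wsubT x w t)
def wsubK (x : ℕ) (w : WT) : KT → KT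
  | .kvar k => .kvar k
  | .lamQ y q => if y = x then .lamQ y q else .lamQ y (wsubQ x w q)
end

mutual
/-- Substitution of a sort-K term for a continuation variable. -/
def ksubT (k : ℕ) (K0 : KT) : TT → TT
  | .lamK l q => if l = k then .lamK l q else .lamK l (ksubQ k K0 q)
  | .app w1 w2 => .app (ksubW k K0 w1) (ksubW k K0 w2)
def ksubQ (k : ℕ) (K0 : KT) : QT → QT
  | .kw K w => .kw (ksubK k K0 K) (ksubW k K0 w)
  | .tk t K => .tk (ksubT k K0 t) (ksubK k K0 K)
def ksubW (k : ℕ) (K0 : KT) : WT → WT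
  | .var y => .var y
  | .lam y t => .lam y (ksubT k K0 t)
def ksubK (k : ℕ) (K0 : KT) : KT → KT
  | .kvar l => if l = k then K0 else .kvar l
  | .lamQ y q => .lamQ y (ksubQ k K0 q)
end

/-! β and η root reductions of the (sorted) target calculus -/

inductive BetaRootT : TT → TT → Prop
  | beta (x : ℕ) (t : TT) (w : WT) : BetaRootT (.app (.lam x t) w) (wsubT x w t)

inductive BetaRootQ : QT → QT → Prop
  | betaK (x : ℕ) (q : QT) (w : WT) : BetaRootQ (.kw (.lamQ x q) w) (wsubQ x w q)
  | betaT (k : ℕ) (q : QT) (K : KT) : BetaRootQ (.tk (.lamK k q) K) (ksubQ k K q)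

inductive EtaRootT : TT → TT → Prop
  | eta (k : ℕ) (t : TT) (h : k ∉ fkT t) : EtaRootT (.lamK k (.tk t (.kvar k))) t

inductive EtaRootW : WT → WT → Prop
  | eta (x : ℕ) (w : WT) (h : x ∉ fvW w) : EtaRootW (.lam x (.app w (.var x))) w

inductive EtaRootK : KT → KT → Prop
  | eta (x : ℕ) (K : KT) (h : x ∉ fvK K) : EtaRootK (.lamQ x (.kw K (.var x))) K

section
variable (RT : TT → TT → Prop) (RQ : QT → QT → Prop)
  (RW : WT → WT → Prop) (RK : KT → KT → Prop)

mutual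
/-- Context closure, sort T. -/
inductive CtxT : TT → TT → Prop
  | root : RT t t' → CtxT t t'
  | lamK : CtxQ q q' → CtxT (.lamK k q) (.lamK k q')
  | appL : CtxW w w' → CtxT (.app w v) (.app w' v)
  | appR : CtxW v v' → CtxT (.app w v) (.app w v')
/-- Context closure, sort Q. -/
inductive CtxQ : QT → QT → Prop
  | root : RQ q q' → CtxQ q q'
  | kwL : CtxK K K' → CtxQ (.kw K w) (.kw K' w)
  | kwR : CtxW w w' → CtxQ (.kw K w) (.kw K w')
  | tkL : CtxT t t' → CtxQ (.tk t K) (.tk t' K)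
  | tkR : CtxK K K' → CtxQ (.tk t K) (.tk t K')
/-- Context closure, sort W. -/
inductive CtxW : WT → WT → Prop
  | root : RW w w' → CtxW w w'
  | lam : CtxT t t' → CtxW (.lam x t) (.lam x t')
/-- Context closure, sort K. -/
inductive CtxK : KT → KT → Prop
  | root : RK K K' → CtxK K K'
  | lamQ : CtxQ q q' → CtxK (.lamQ x q) (.lamQ x q')
end

end

def NoT : TT → TT → Prop := fun _ _ => False
def NoQ : QT → QT → Prop := fun _ _ => False
def NoW : WT → WT → Prop := fun _ _ => False
def NoK : KT → KT → Prop := fun _ _ => False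

/-- One β-reduction step, per sort. -/
def BStepT : TT → TT → Prop := CtxT BetaRootT BetaRootQ NoW NoK
def BStepQ : QT → QT → Prop := CtxQ BetaRootT BetaRootQ NoW NoK
def BStepW : WT → WT → Prop := CtxW BetaRootT BetaRootQ NoW NoK
def BStepK : KT → KT → Prop := CtxK BetaRootT BetaRootQ NoW NoK

/-- One βη-reduction step, per sort. -/
def BERootT : TT → TT → Prop := fun a b => BetaRootT a b ∨ EtaRootT a b
def BEStepT : TT → TT → Prop := CtxT BERootT BetaRootQ EtaRootW EtaRootK
def BEStepQ : QT → QT → Prop := CtxQ BERootT BetaRootQ EtaRootW EtaRootK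
def BEStepW : WT → WT → Prop := CtxW BERootT BetaRootQ EtaRootW EtaRootK
def BEStepK : KT → KT → Prop := CtxK BERootT BetaRootQ EtaRootW EtaRootK

mutual
/-- The grammar T_NF of β-normal terms of sort T. -/
inductive NFT : TT → Prop
  | lamK : NFQ q → NFT (.lamK k q)
  | app : NFW w → NFT (.app (.var x) w)
/-- The grammar Q_NF. -/
inductive NFQ : QT → Prop
  | xwk : NFW w → NFK K → NFQ (.tk (.app (.var x) w) K)
  | kw : NFW w → NFQ (.kw (.kvar k) w)
/-- The grammar W_NF. -/
inductive NFW : WT → Prop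
  | var : NFW (.var x)
  | lam : NFT t → NFW (.lam x t)
/-- The grammar K_NF. -/
inductive NFK : KT → Prop
  | kvar : NFK (.kvar k)
  | lamQ : NFQ q → NFK (.lamQ x q)
end

/-!
A term belongs to the grammar iff no β-redex occurs in it: besides closure under subterms,
the grammar only demands that the head of `W W` be an ordinary variable, the head of `K W` a
continuation variable, and the head of `T K` not a `λk`, and the excluded alternatives are
exactly the three root redexes.
-/

mutual
theorem BStepT.not_nfT : ∀ {t t' : TT}, BStepT t t' → ¬ NFT t
  | _, _, .root (.beta ..), h => nomatch h
  | _, _, .lamK hq, .lamK h => BStepQ.not_nfQ hq h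
  | _, _, .appL hw, .app _ => BStepW.not_nfW hw .var
  | _, _, .appR hw, .app h => BStepW.not_nfW hw h
theorem BStepQ.not_nfQ : ∀ {q q' : QT}, BStepQ q q' → ¬ NFQ q
  | _, _, .root (.betaK ..), h => nomatch h
  | _, _, .root (.betaT ..), h => nomatch h
  | _, _, .kwL hK, .kw _ => BStepK.not_nfK hK .kvar
  | _, _, .kwR hw, .kw h => BStepW.not_nfW hw h
  | _, _, .tkL ht, .xwk h _ => BStepT.not_nfT ht (.app h)
  | _, _, .tkR hK, .xwk _ h => BStepK.not_nfK hK h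
theorem BStepW.not_nfW : ∀ {w w' : WT}, BStepW w w' → ¬ NFW w
  | _, _, .lam ht, .lam h => BStepT.not_nfT ht h
theorem BStepK.not_nfK : ∀ {K K' : KT}, BStepK K K' → ¬ NFK K
  | _, _, .lamQ hq, .lamQ h => BStepQ.not_nfQ hq h
end

mutual
theorem nfT_of_forall_not_bStepT : ∀ t : TT, (∀ t', ¬ BStepT t t') → NFT t
  | .lamK _ q, h => .lamK (nfQ_of_forall_not_bStepQ q fun _ hq => h _ (.lamK hq))
  | .app w v, h =>
    have hv := nfW_of_forall_not_bStepW v fun _ hv => h _ (.appR hv)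
    match w, nfW_of_forall_not_bStepW w (fun _ hw => h _ (.appL hw)) with
    | _, .var => .app hv
    | _, .lam _ => absurd (.root (.beta ..)) (h _)
theorem nfQ_of_forall_not_bStepQ : ∀ q : QT, (∀ q', ¬ BStepQ q q') → NFQ q
  | .kw K w, h =>
    have hw := nfW_of_forall_not_bStepW w fun _ hw => h _ (.kwR hw)
    match K, nfK_of_forall_not_bStepK K (fun _ hK => h _ (.kwL hK)) with
    | _, .kvar => .kw hw
    | _, .lamQ _ => absurd (.root (.betaK ..)) (h _)
  | .tk t K, h =>
    have hK := nfK_of_forall_not_bStepK K fun _ hK => h _ (.tkR hK)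
    match t, nfT_of_forall_not_bStepT t (fun _ ht => h _ (.tkL ht)) with
    | _, .app hw => .xwk hw hK
    | _, .lamK _ => absurd (.root (.betaT ..)) (h _)
theorem nfW_of_forall_not_bStepW : ∀ w : WT, (∀ w', ¬ BStepW w w') → NFW w
  | .var _, _ => .var
  | .lam _ t, h => .lam (nfT_of_forall_not_bStepT t fun _ ht => h _ (.lam ht))
theorem nfK_of_forall_not_bStepK : ∀ K : KT, (∀ K', ¬ BStepK K K') → NFK K
  | .kvar _, _ => .kvar
  | .lamQ _ q, h => .lamQ (nfQ_of_forall_not_bStepQ q fun _ hq => h _ (.lamQ hq))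
end

/-- A term of the sorted target calculus is β-normal iff it
belongs to the grammar T_NF (resp. Q_NF, W_NF, K_NF). -/
theorem beta_normal_iff_grammar :
    (∀ t : TT, (∀ t', ¬ BStepT t t') ↔ NFT t) ∧
    (∀ q : QT, (∀ q', ¬ BStepQ q q') ↔ NFQ q) ∧
    (∀ w : WT, (∀ w', ¬ BStepW w w') ↔ NFW w) ∧
    (∀ K : KT, (∀ K', ¬ BStepK K K') ↔ NFK K) :=
  ⟨fun t => ⟨nfT_of_forall_not_bStepT t, fun hn _ hs => hs.not_nfT hn⟩,
   fun q => ⟨nfQ_of_forall_not_bStepQ q, fun hn _ hs => hs.not_nfQ hn⟩,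
   fun w => ⟨nfW_of_forall_not_bStepW w, fun hn _ hs => hs.not_nfW hn⟩,
   fun K => ⟨nfK_of_forall_not_bStepK K, fun hn _ hs => hs.not_nfK hn⟩⟩
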